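/- The infinite series s_N(ℓ) = ∑_{k=−∞}^{+∞} (−1)^{k(N−1)} sinc(N(ℓ − k)) converges and equals the Dirichlet kernel D_N(ℓ) = sin(πNℓ)/(N sin(πℓ)) for all ℓ where sin(πℓ) ≠ 0, where sinc(x) = sin(πx)/(πx). -/

import Mathlib

/-!
Since `sin (π N (ℓ - k)) = (-1)^(N k) sin (π N ℓ)`, the `k`-th term equals
`sin (π N ℓ) / (π N) * (-1)^k / (ℓ - k)`, so the claim reduces to the partial fraction expansion
`π / sin (π z) = ∑ₖ (-1)^k / (z - k)` in symmetric partial sums. The alternating sum is twice its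
even part minus the full sum `∑ₖ 1 / (z - k)`, and the even part is half of the full sum at `z / 2`.
Mittag-Leffler's expansion `π cot (π z) = ∑ₖ 1 / (z - k)` together with
`cot w - cot (2 w) = 1 / sin (2 w)` then gives the limit.
-/

/-- Normalized sinc function: `sinc x = sin(πx)/(πx)`, `sinc 0 = 1`. -/
noncomputable def sinc (x : ℝ) : ℝ :=
  if x = 0 then 1 else Real.sin (Real.pi * x) / (Real.pi * x)

open Filter Finset Topology
open scoped Real

lemma Finset.sum_Icc_filter_even {M : Type*} [AddCommMonoid M] (f : ℤ → M) (K : ℕ) :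
    ∑ k ∈ Icc (-K : ℤ) K with Even k, f k =
      ∑ n ∈ Icc (-(K / 2 : ℕ) : ℤ) (K / 2 : ℕ), f (2 * n) := by
  symm
  refine sum_nbij' (2 * ·) (· / 2) ?_ ?_ ?_ ?_ fun _ _ ↦ rfl
  all_goals intro k hk; simp only [mem_Icc, Int.even_iff, mem_filter] at hk ⊢
  all_goals push_cast at hk ⊢; omega

namespace Complex

lemma cot_sub_cot_two_mul {w : ℂ} (hw : sin (2 * w) ≠ 0) :
    cot w - cot (2 * w) = 1 / sin (2 * w) := by
  rw [sin_two_mul] at hw ⊢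
  have hs : sin w ≠ 0 := fun h ↦ hw (by simp [h])
  have hc : cos w ≠ 0 := fun h ↦ hw (by simp [h])
  rw [cot_eq_cos_div_sin, cot_eq_cos_div_sin, sin_two_mul, cos_two_mul]
  field_simp
  ring

lemma sum_Icc_one_div_sub_eq (z : ℂ) (K : ℕ) :
    ∑ k ∈ Icc (-K : ℤ) K, 1 / (z - k) = 1 / z + ∑ j ∈ range K, cotTerm z j := by
  induction K with
  | zero => simp
  | succ K ih =>
    rw [Nat.cast_succ, sum_Icc_succ_eq_add_endpoints, ih, sum_range_succ, cotTerm]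
    push_cast
    ring

lemma tendsto_sum_Icc_one_div_sub {z : ℂ} (hz : z ∈ integerComplement) :
    Tendsto (fun K : ℕ ↦ ∑ k ∈ Icc (-K : ℤ) K, 1 / (z - k)) atTop (𝓝 (π * cot (π * z))) := by
  simp_rw [sum_Icc_one_div_sub_eq]
  simpa using (tendsto_logDeriv_euler_cot_sub hz).const_add (1 / z)

lemma sum_Icc_neg_one_zpow_div_sub (z : ℂ) (K : ℕ) :
    ∑ k ∈ Icc (-K : ℤ) K, (-1 : ℂ) ^ k / (z - k) =
      ∑ n ∈ Icc (-(K / 2 : ℕ) : ℤ) (K / 2 : ℕ), 1 / (z / 2 - n) -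
        ∑ k ∈ Icc (-K : ℤ) K, 1 / (z - k) := by
  calc ∑ k ∈ Icc (-K : ℤ) K, (-1 : ℂ) ^ k / (z - k)
      = ∑ k ∈ Icc (-K : ℤ) K, (2 * (if Even k then 1 / (z - k) else 0) - 1 / (z - k)) := by
        refine sum_congr rfl fun k _ ↦ ?_
        rcases Int.even_or_odd k with hk | hk
        · rw [if_pos hk, hk.neg_one_zpow]; ring
        · rw [if_neg (Int.not_even_iff_odd.2 hk), hk.neg_one_zpow]; ring
    _ = 2 * ∑ k ∈ Icc (-K : ℤ) K with Even k, 1 / (z - k) -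
          ∑ k ∈ Icc (-K : ℤ) K, 1 / (z - k) := by
        rw [sum_sub_distrib, ← mul_sum, sum_filter]
    _ = _ := by
        rw [sum_Icc_filter_even, mul_sum]
        congr 1
        refine sum_congr rfl fun n _ ↦ ?_
        -- `2 / (z - 2n) = 1 / (z / 2 - n)` holds also when both sides are the junk value `0`
        rw [show z / 2 - n = (z - (2 * n : ℤ)) / 2 by push_cast; ring, one_div_div]
        ring

theorem tendsto_sum_Icc_neg_one_zpow_div_sub {z : ℂ} (hz : z ∈ integerComplement) :
    Tendsto (fun K : ℕ ↦ ∑ k ∈ Icc (-K : ℤ) K, (-1 : ℂ) ^ k / (z - k)) atTop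
      (𝓝 (π / sin (π * z))) := by
  have hz2 : z / 2 ∈ integerComplement := by
    rintro ⟨n, hn⟩
    exact hz ⟨2 * n, by push_cast; rw [hn]; ring⟩
  have hcot := cot_sub_cot_two_mul (w := π * (z / 2))
    (by rw [show 2 * (π * (z / 2)) = π * z by ring]; exact sin_pi_mul_ne_zero hz)
  rw [show 2 * (π * (z / 2)) = π * z by ring] at hcot
  simp_rw [sum_Icc_neg_one_zpow_div_sub]
  have hlim := ((tendsto_sum_Icc_one_div_sub hz2).comp
    (Nat.tendsto_div_const_atTop two_ne_zero)).sub (tendsto_sum_Icc_one_div_sub hz)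
  rwa [← mul_sub, hcot, mul_one_div] at hlim

end Complex

theorem Real.tendsto_sum_Icc_neg_one_zpow_div_sub {x : ℝ} (hx : sin (π * x) ≠ 0) :
    Tendsto (fun K : ℕ ↦ ∑ k ∈ Icc (-K : ℤ) K, (-1 : ℝ) ^ k / (x - k)) atTop
      (𝓝 (π / sin (π * x))) := by
  have hxZ : (x : ℂ) ∈ Complex.integerComplement := by
    rintro ⟨n, hn⟩
    rw [← Complex.ofReal_intCast, Complex.ofReal_inj] at hn
    exact hx (by rw [← hn, mul_comm, sin_int_mul_pi])
  rw [← tendsto_ofReal_iff]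
  push_cast
  exact Complex.tendsto_sum_Icc_neg_one_zpow_div_sub hxZ

lemma neg_one_zpow_mul_sinc_natCast_mul_sub {N : ℕ} (hN : N ≠ 0) {x : ℝ} {k : ℤ} (hk : x ≠ k) :
    (-1 : ℝ) ^ (k * ((N : ℤ) - 1)) * sinc (N * (x - k)) =
      Real.sin (π * N * x) / (π * N) * ((-1) ^ k / (x - k)) := by
  have hN' : (N : ℝ) ≠ 0 := Nat.cast_ne_zero.2 hN
  have hxk : x - k ≠ 0 := sub_ne_zero.2 hk
  have hsin : Real.sin (π * (N * (x - k))) = (-1) ^ ((N : ℤ) * k) * Real.sin (π * N * x) := by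
    rw [show π * (N * (x - k)) = π * N * x - ((N * k : ℤ) : ℝ) * π by push_cast; ring,
      Real.sin_sub_int_mul_pi]
  have hsign : (-1 : ℝ) ^ (k * ((N : ℤ) - 1)) * (-1) ^ ((N : ℤ) * k) = (-1) ^ k := by
    rw [← zpow_add₀ (by norm_num), show k * ((N : ℤ) - 1) + N * k = k + 2 * (N * k - k) by ring,
      zpow_add₀ (by norm_num), zpow_mul]
    norm_num
  rw [sinc, if_neg (mul_ne_zero hN' hxk), hsin, ← hsign]
  field_simp

/-- Whittaker–Shannon interpolation of the LAD response (with `d = λ/2`, so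
`B_N = N`): the symmetric series `∑_{k∈ℤ} (-1)^{k(N-1)} sinc(N(ℓ-k))` converges
to the Dirichlet kernel `sin(πNℓ)/(N sin(πℓ))` whenever `sin(πℓ) ≠ 0`. -/
theorem stmt_5 (N : ℕ) (hN : 1 ≤ N) (ℓ : ℝ) (h : Real.sin (Real.pi * ℓ) ≠ 0) :
    Filter.Tendsto (fun K : ℕ => ∑ k ∈ Finset.Icc (-(K : ℤ)) (K : ℤ),
        (-1 : ℝ) ^ (k * ((N : ℤ) - 1)) * sinc ((N : ℝ) * (ℓ - (k : ℝ))))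
      Filter.atTop
      (nhds (Real.sin (Real.pi * N * ℓ) / (N * Real.sin (Real.pi * ℓ)))) := by
  have hN0 : N ≠ 0 := Nat.one_le_iff_ne_zero.1 hN
  have hℓ (k : ℤ) : ℓ ≠ k := fun hk ↦ h (by rw [hk, mul_comm, Real.sin_int_mul_pi])
  have hval : Real.sin (π * N * ℓ) / (N * Real.sin (π * ℓ)) =
      Real.sin (π * N * ℓ) / (π * N) * (π / Real.sin (π * ℓ)) := by
    field_simp
  rw [hval]
  refine ((Real.tendsto_sum_Icc_neg_one_zpow_div_sub h).const_mul _).congr fun K ↦ ?_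
  rw [mul_sum]
  exact sum_congr rfl fun k _ ↦ (neg_one_zpow_mul_sinc_natCast_mul_sub hN0 (hℓ k)).symm
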